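/- arXiv:2311.05191 — 2 statements merged into one kernel-verified Lean document; each statement's English description precedes it below -/
import Mathlib

section
/- Let n ≥ 2 and let Ω ⊆ ℝ^n be a bounded open set. Suppose u is a weak solution of −div(D∇u) + μu = q in Ω for some continuous function q : ℝ^n → ℝ. Then for every smooth function m : ℝ^n → ℝ whose support is compact and contained in Ω, the function u + m is a weak solution of −div(D∇(u+m)) + μ(u+m) = q − (DΔm + ∇D·∇m) + μm in Ω, and moreover u + m = u and ∇(u + m) = ∇u at every point of the frontier of Ω. In particular, if DΔm + ∇D·∇m − μm is not identically zero on Ω, the two distinct sources q and q − (DΔm + ∇D·∇m) + μm produce identical Cauchy data (boundary values and boundary gradient) on the frontier of Ω. -/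
open MeasureTheory Set

noncomputable section

abbrev Euc (n : ℕ) := EuclideanSpace ℝ (Fin n)

/-- The Laplacian of a real-valued function on `ℝⁿ`, as the sum of second partials. -/
noncomputable def lapR {n : ℕ} (f : Euc n → ℝ) (x : Euc n) : ℝ :=
  ∑ i : Fin n, fderiv ℝ (fun y => fderiv ℝ f y (EuclideanSpace.single i 1)) x
      (EuclideanSpace.single i 1)

/-- `u` is a weak solution of `−div(D∇u) + μu = f` in `U`: `u` is `C¹` on an open
neighbourhood of the closure of `U`, and the weak formulation holds against every smooth
compactly supported test function with support in `U`. -/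
def IsWeakSolution {n : ℕ} (D μ : Euc n → ℝ) (U : Set (Euc n)) (f u : Euc n → ℝ) : Prop :=
  (∃ V : Set (Euc n), IsOpen V ∧ closure U ⊆ V ∧ ContDiffOn ℝ 1 u V) ∧
  ∀ ψ : Euc n → ℝ, ContDiff ℝ (⊤ : ℕ∞) ψ → HasCompactSupport ψ → tsupport ψ ⊆ U →
    ∫ x in U, (D x * (inner ℝ (gradient u x) (gradient ψ x) : ℝ) + μ x * u x * ψ x) =
      ∫ x in U, f x * ψ x

lemma inner_gradient {n : ℕ} (f : Euc n → ℝ) (x v : Euc n) :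
    (inner ℝ (gradient f x) v : ℝ) = fderiv ℝ f x v := by
  simp [gradient, InnerProductSpace.toDual_symm_apply]

lemma grad_apply {n : ℕ} (f : Euc n → ℝ) (x : Euc n) (i : Fin n) :
    gradient f x i = fderiv ℝ f x (EuclideanSpace.single i 1) := by
  have h := inner_gradient f x (EuclideanSpace.single i 1)
  rw [EuclideanSpace.inner_single_right] at h
  simpa using h

lemma inner_grad_sum {n : ℕ} (f g : Euc n → ℝ) (x : Euc n) :
    (inner ℝ (gradient f x) (gradient g x) : ℝ) =
      ∑ i : Fin n, fderiv ℝ f x (EuclideanSpace.single i 1) *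
        fderiv ℝ g x (EuclideanSpace.single i 1) := by
  rw [PiLp.inner_apply]
  simp [grad_apply, mul_comm]

lemma continuous_gradient {n : ℕ} {f : Euc n → ℝ} (hf : Continuous (fderiv ℝ f)) :
    Continuous (gradient f) :=
  (InnerProductSpace.toDual ℝ (Euc n)).symm.continuous.comp hf

lemma continuousOn_gradient {n : ℕ} {f : Euc n → ℝ} {s : Set (Euc n)}
    (hf : ContinuousOn (fderiv ℝ f) s) : ContinuousOn (gradient f) s :=
  (InnerProductSpace.toDual ℝ (Euc n)).symm.continuous.comp_continuousOn hf

lemma gradient_eq_zero_of_nmem_tsupport {n : ℕ} {f : Euc n → ℝ} {x : Euc n}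
    (hx : x ∉ tsupport f) : gradient f x = 0 := by
  have h : fderiv ℝ f x = 0 := by
    by_contra h
    exact hx (support_fderiv_subset ℝ (by simpa [Function.mem_support] using h))
  simp [gradient, h]

lemma ibp_coord {n : ℕ} (D m ψ : Euc n → ℝ) (hD : ContDiff ℝ 1 D) (hm : ContDiff ℝ (⊤ : ℕ∞) m)
    (hψ : ContDiff ℝ (⊤ : ℕ∞) ψ) (hψc : HasCompactSupport ψ) (i : Fin n) :
    ∫ x, (D x * fderiv ℝ m x (EuclideanSpace.single i 1)) *
        fderiv ℝ ψ x (EuclideanSpace.single i 1) =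
      - ∫ x, fderiv ℝ (fun y => D y * fderiv ℝ m y (EuclideanSpace.single i 1)) x
          (EuclideanSpace.single i 1) * ψ x := by
  set e : Euc n := EuclideanSpace.single i 1 with he
  have hdm : ContDiff ℝ 1 (fun x => fderiv ℝ m x e) :=
    ((hm.fderiv_right (m := 1) (WithTop.coe_le_coe.2 le_top)).clm_apply contDiff_const).of_le le_rfl
  have hf : ContDiff ℝ 1 (fun x => D x * fderiv ℝ m x e) := hD.mul hdm
  have hfc : Continuous (fun x => fderiv ℝ (fun y => D y * fderiv ℝ m y e) x e) :=
    (hf.continuous_fderiv one_ne_zero).clm_apply continuous_const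
  have hψ' : Continuous (fun x => fderiv ℝ ψ x e) :=
    ((hψ.of_le (by simp) : ContDiff ℝ 1 ψ).continuous_fderiv one_ne_zero).clm_apply continuous_const
  refine integral_mul_fderiv_eq_neg_fderiv_mul_of_integrable ?_ ?_ ?_
    (fun x _ => hf.differentiable one_ne_zero x) (fun x _ => hψ.differentiable (by simp) x)
  · exact (hfc.mul hψ.continuous).integrable_of_hasCompactSupport (hψc.mul_left)
  · refine (hf.continuous.mul hψ').integrable_of_hasCompactSupport ?_
    exact HasCompactSupport.mul_left (hψc.fderiv_apply (𝕜 := ℝ) e)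
  · exact (hf.continuous.mul hψ.continuous).integrable_of_hasCompactSupport hψc.mul_left

lemma ibp {n : ℕ} (D m ψ : Euc n → ℝ) (hD : ContDiff ℝ 1 D) (hm : ContDiff ℝ (⊤ : ℕ∞) m)
    (hψ : ContDiff ℝ (⊤ : ℕ∞) ψ) (hψc : HasCompactSupport ψ) :
    ∫ x, D x * (inner ℝ (gradient m x) (gradient ψ x) : ℝ) =
      - ∫ x, (D x * lapR m x + (inner ℝ (gradient D x) (gradient m x) : ℝ)) * ψ x := by
  set e : Fin n → Euc n := fun i => EuclideanSpace.single i 1 with he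
  have hdm : ∀ i, ContDiff ℝ 1 (fun x => fderiv ℝ m x (e i)) := fun i =>
    ((hm.fderiv_right (m := 1) (WithTop.coe_le_coe.2 le_top)).clm_apply contDiff_const).of_le le_rfl
  have hf : ∀ i, ContDiff ℝ 1 (fun x => D x * fderiv ℝ m x (e i)) := fun i => hD.mul (hdm i)
  have hψ' : ∀ i, Continuous (fun x => fderiv ℝ ψ x (e i)) := fun i =>
    ((hψ.of_le (by simp) : ContDiff ℝ 1 ψ).continuous_fderiv one_ne_zero).clm_apply continuous_const
  have hint1 : ∀ i, Integrable (fun x => (D x * fderiv ℝ m x (e i)) * fderiv ℝ ψ x (e i)) :=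
    fun i => ((hf i).continuous.mul (hψ' i)).integrable_of_hasCompactSupport
      (HasCompactSupport.mul_left (hψc.fderiv_apply (𝕜 := ℝ) (e i)))
  have hint2 : ∀ i, Integrable
      (fun x => fderiv ℝ (fun y => D y * fderiv ℝ m y (e i)) x (e i) * ψ x) := fun i =>
    ((((hf i).continuous_fderiv one_ne_zero).clm_apply continuous_const).mul
      hψ.continuous).integrable_of_hasCompactSupport hψc.mul_left
  calc ∫ x, D x * (inner ℝ (gradient m x) (gradient ψ x) : ℝ)
      = ∫ x, ∑ i, (D x * fderiv ℝ m x (e i)) * fderiv ℝ ψ x (e i) := by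
        congr 1; funext x
        rw [inner_grad_sum, Finset.mul_sum]
        exact Finset.sum_congr rfl fun i _ => (mul_assoc _ _ _).symm
    _ = ∑ i, ∫ x, (D x * fderiv ℝ m x (e i)) * fderiv ℝ ψ x (e i) :=
        integral_finset_sum _ (fun i _ => hint1 i)
    _ = ∑ i, - ∫ x, fderiv ℝ (fun y => D y * fderiv ℝ m y (e i)) x (e i) * ψ x :=
        Finset.sum_congr rfl fun i _ => ibp_coord D m ψ hD hm hψ hψc i
    _ = - ∑ i, ∫ x, fderiv ℝ (fun y => D y * fderiv ℝ m y (e i)) x (e i) * ψ x := by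
        rw [Finset.sum_neg_distrib]
    _ = - ∫ x, ∑ i, fderiv ℝ (fun y => D y * fderiv ℝ m y (e i)) x (e i) * ψ x := by
        rw [integral_finset_sum _ (fun i _ => hint2 i)]
    _ = - ∫ x, (D x * lapR m x + (inner ℝ (gradient D x) (gradient m x) : ℝ)) * ψ x := by
        congr 1
        apply integral_congr_ae
        filter_upwards with x
        have hmul : ∀ i, fderiv ℝ (fun y => D y * fderiv ℝ m y (e i)) x (e i) =
            D x * fderiv ℝ (fun y => fderiv ℝ m y (e i)) x (e i) +
              fderiv ℝ m x (e i) * fderiv ℝ D x (e i) := by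
          intro i
          rw [fderiv_fun_mul (hD.differentiable one_ne_zero x) ((hdm i).differentiable one_ne_zero x)]
          simp [smul_eq_mul]
        simp_rw [hmul]
        rw [← Finset.sum_mul, Finset.sum_add_distrib, ← Finset.mul_sum, inner_grad_sum, lapR]
        congr 2
        exact Finset.sum_congr rfl fun i _ => mul_comm _ _

theorem blt_nonuniqueness {n : ℕ} (hn : 2 ≤ n) (Ω : Set (Euc n)) (hΩo : IsOpen Ω)
    (hΩb : Bornology.IsBounded Ω)
    (D μ : Euc n → ℝ) (hD : ContDiff ℝ 1 D) (Dstar : ℝ) (hDstar : 0 < Dstar)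
    (hDlow : ∀ x, Dstar ≤ D x) (hμc : Continuous μ) (hμ : ∀ x, 0 ≤ μ x)
    (q : Euc n → ℝ) (hq : Continuous q) (u : Euc n → ℝ)
    (hu : IsWeakSolution D μ Ω q u) :
    ∀ m : Euc n → ℝ, ContDiff ℝ (⊤ : ℕ∞) m → HasCompactSupport m → tsupport m ⊆ Ω →
      IsWeakSolution D μ Ω
        (fun x => q x - (D x * lapR m x + (inner ℝ (gradient D x) (gradient m x) : ℝ))
          + μ x * m x) (u + m) ∧
      (∀ x ∈ frontier Ω, (u + m) x = u x ∧ gradient (u + m) x = gradient u x) ∧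
      ((∃ x ∈ Ω, D x * lapR m x + (inner ℝ (gradient D x) (gradient m x) : ℝ) - μ x * m x ≠ 0) →
        ∃ x ∈ Ω, q x - (D x * lapR m x + (inner ℝ (gradient D x) (gradient m x) : ℝ))
          + μ x * m x ≠ q x) := by
  intro m hm hmc hms
  obtain ⟨⟨V, hVo, hVcl, huV⟩, hweak⟩ := hu
  have hmd : Differentiable ℝ m := hm.differentiable (by simp)
  have hud : ∀ x ∈ V, DifferentiableAt ℝ u x := fun x hx =>
    (huV.differentiableOn one_ne_zero).differentiableAt (hVo.mem_nhds hx)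
  have hgrad_add : ∀ x ∈ V, gradient (u + m) x = gradient u x + gradient m x := by
    intro x hx
    have : fderiv ℝ (u + m) x = fderiv ℝ u x + fderiv ℝ m x := fderiv_add (hud x hx) (hmd x)
    simp [gradient, this]
  -- Laplacian-related function A
  set A : Euc n → ℝ := fun x =>
    D x * lapR m x + (inner ℝ (gradient D x) (gradient m x) : ℝ) with hA
  have hAc : Continuous A := by
    have h1 : Continuous (lapR m) := by
      apply continuous_finset_sum
      intro i _
      exact (((hm.fderiv_right (WithTop.coe_le_coe.2 le_top)).clm_apply contDiff_const).continuous_fderiv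
        one_ne_zero).clm_apply continuous_const
    have h2 : Continuous (gradient D) := continuous_gradient (hD.continuous_fderiv one_ne_zero)
    have h3 : Continuous (gradient m) := continuous_gradient (hm.continuous_fderiv (by simp))
    exact ((hD.continuous.mul h1).add (h2.inner h3))
  refine ⟨⟨⟨V, hVo, hVcl, huV.add (hm.of_le (by simp)).contDiffOn⟩, ?_⟩, ?_, ?_⟩
  · -- weak formulation
    intro ψ hψ hψc hψs
    have hψd : Differentiable ℝ ψ := hψ.differentiable (by simp)
    have hgψ : Continuous (gradient ψ) := continuous_gradient (hψ.continuous_fderiv (by simp))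
    have hgm : Continuous (gradient m) := continuous_gradient (hm.continuous_fderiv (by simp))
    -- the two pieces
    set Fu : Euc n → ℝ := fun x =>
      D x * (inner ℝ (gradient u x) (gradient ψ x) : ℝ) + μ x * u x * ψ x with hFu
    set G : Euc n → ℝ := fun x =>
      D x * (inner ℝ (gradient m x) (gradient ψ x) : ℝ) + μ x * m x * ψ x with hG
    have hKc : IsCompact (closure Ω) := hΩb.isCompact_closure
    have hFuc : ContinuousOn Fu V := by
      have hgu : ContinuousOn (gradient u) V :=
        continuousOn_gradient (huV.continuousOn_fderiv_of_isOpen hVo le_rfl)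
      exact (hD.continuous.continuousOn.mul (hgu.inner hgψ.continuousOn)).add
        ((hμc.continuousOn.mul (huV.continuousOn)).mul hψ.continuous.continuousOn)
    have hFuInt : IntegrableOn Fu Ω := by
      refine IntegrableOn.mono_set ?_ subset_closure
      exact (hFuc.mono hVcl).integrableOn_compact hKc
    have hGzero : ∀ x, x ∉ Ω → G x = 0 := by
      intro x hx
      have hxψ : x ∉ tsupport ψ := fun h => hx (hψs h)
      have h1 : ψ x = 0 := image_eq_zero_of_notMem_tsupport hxψ
      have h2 : gradient ψ x = 0 := gradient_eq_zero_of_nmem_tsupport hxψ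
      simp [hG, h1, h2, fderiv_of_notMem_tsupport (𝕜 := ℝ) hxψ]
    have hGc : Continuous G :=
      (hD.continuous.mul (hgm.inner hgψ)).add ((hμc.mul hm.continuous).mul hψ.continuous)
    have hGsupp : HasCompactSupport G := by
      apply HasCompactSupport.intro hψc
      intro x hx
      have : x ∉ tsupport ψ := hx
      simp [hG, image_eq_zero_of_notMem_tsupport this,
        gradient_eq_zero_of_nmem_tsupport this, fderiv_of_notMem_tsupport (𝕜 := ℝ) this]
    have hGInt : Integrable G := hGc.integrable_of_hasCompactSupport hGsupp
    -- similarly for the RHS correction term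
    set H : Euc n → ℝ := fun x => (- A x + μ x * m x) * ψ x with hH
    have hHzero : ∀ x, x ∉ Ω → H x = 0 := by
      intro x hx
      have hxψ : x ∉ tsupport ψ := fun h => hx (hψs h)
      simp [hH, image_eq_zero_of_notMem_tsupport hxψ]
    have hHc : Continuous H := ((hAc.neg.add (hμc.mul hm.continuous)).mul hψ.continuous)
    have hHInt : Integrable H :=
      hHc.integrable_of_hasCompactSupport (hψc.mul_left)
    -- key global identity: ∫ G = ∫ H
    have hGH : ∫ x, G x = ∫ x, H x := by
      have i1 : Integrable fun x => D x * (inner ℝ (gradient m x) (gradient ψ x) : ℝ) := by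
        refine (hD.continuous.mul (hgm.inner hgψ)).integrable_of_hasCompactSupport ?_
        apply HasCompactSupport.intro hψc
        intro x hx
        simp [gradient_eq_zero_of_nmem_tsupport (hx : x ∉ tsupport ψ), fderiv_of_notMem_tsupport (𝕜 := ℝ) (hx : x ∉ tsupport ψ)]
      have i2 : Integrable fun x => μ x * m x * ψ x :=
        ((hμc.mul hm.continuous).mul hψ.continuous).integrable_of_hasCompactSupport hψc.mul_left
      have i3 : Integrable fun x => A x * ψ x :=
        (hAc.mul hψ.continuous).integrable_of_hasCompactSupport hψc.mul_left
      have key := ibp D m ψ hD hm hψ hψc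
      calc ∫ x, G x = (∫ x, D x * (inner ℝ (gradient m x) (gradient ψ x) : ℝ)) +
            ∫ x, μ x * m x * ψ x := integral_add i1 i2
        _ = (- ∫ x, A x * ψ x) + ∫ x, μ x * m x * ψ x := by rw [key]
        _ = ∫ x, (- (A x * ψ x) + μ x * m x * ψ x) := by
            rw [← integral_neg]
            exact (integral_add i3.neg i2).symm
        _ = ∫ x, H x := by
            congr 1; funext x; simp [hH]; ring
    -- now assemble
    have hsplitL : ∫ x in Ω, (D x * (inner ℝ (gradient (u + m) x) (gradient ψ x) : ℝ) +
        μ x * (u + m) x * ψ x) = (∫ x in Ω, Fu x) + ∫ x in Ω, G x := by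
      rw [← integral_add hFuInt hGInt.integrableOn]
      apply setIntegral_congr_fun hΩo.measurableSet
      intro x hx
      have hxV : x ∈ V := hVcl (subset_closure hx)
      simp only [hFu, hG, Pi.add_apply]
      rw [hgrad_add x hxV, inner_add_left]
      ring
    have hsplitR : ∫ x in Ω, (q x - A x + μ x * m x) * ψ x =
        (∫ x in Ω, q x * ψ x) + ∫ x in Ω, H x := by
      have hqInt : IntegrableOn (fun x => q x * ψ x) Ω :=
        ((hq.mul hψ.continuous).integrable_of_hasCompactSupport hψc.mul_left).integrableOn
      rw [← integral_add hqInt hHInt.integrableOn]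
      apply setIntegral_congr_fun hΩo.measurableSet
      intro x _
      simp [hH]; ring
    rw [hsplitL, hsplitR, hweak ψ hψ hψc hψs,
      setIntegral_eq_integral_of_forall_compl_eq_zero hGzero,
      setIntegral_eq_integral_of_forall_compl_eq_zero hHzero, hGH]
  · -- boundary behaviour
    intro x hx
    have hxV : x ∈ V := hVcl (frontier_subset_closure hx)
    have hxΩ : x ∉ Ω := by rw [hΩo.frontier_eq] at hx; exact hx.2
    have hxm : x ∉ tsupport m := fun h => hxΩ (hms h)
    have h1 : m x = 0 := image_eq_zero_of_notMem_tsupport hxm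
    have h2 : fderiv ℝ m x = 0 := by
      by_contra h
      exact hxm (support_fderiv_subset ℝ (by simpa [Function.mem_support] using h))
    refine ⟨by simp [h1], ?_⟩
    have h3 : fderiv ℝ (u + m) x = fderiv ℝ u x := by
      rw [fderiv_add (hud x hxV) (hmd x), h2, add_zero]
    simp [gradient, h3]
  · rintro ⟨x, hxΩ, hxne⟩
    exact ⟨x, hxΩ, fun h => hxne (by linarith)⟩
end
end

section
/- Let n ≥ 2, let ξ, η ∈ ℝ^n be orthonormal vectors, set ζ := ξ + iη ∈ ℂ^n, let ρ ∈ (0,1], h > 0, and let C := {x ∈ ℝ^n : ⟨ξ, x⟩ ≥ ρ‖x‖}. Then there exists a constant C_2 = C_2(n, ρ, h) such that for all τ ≥ 1, ∫_{C ∩ B_h(0)} |exp(−τ⟨ζ, x⟩)|² dx ≤ C_2 τ^{−n}, where B_h(0) is the open ball of radius h centered at 0. -/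
open MeasureTheory Set

noncomputable section

lemma cgo_aux_integrable {n : ℕ} {b : ℝ} (hb : 0 < b) :
    Integrable (fun x : Euc n => Real.exp (-b * ‖x‖)) := by
  have hfin : (Module.finrank ℝ (Euc n) : ℝ) < ((n : ℝ) + 1) := by
    rw [finrank_euclideanSpace_fin]; linarith
  have hint := integrable_one_add_norm (E := Euc n) (μ := volume) hfin
  set M : ℝ := Real.exp b * (Nat.factorial (n + 1) : ℝ) / b ^ (n + 1) with hM
  refine (hint.const_mul M).mono' ?_ (Filter.Eventually.of_forall fun x => ?_)
  · exact (Real.continuous_exp.comp ((continuous_const.mul continuous_norm))).aestronglyMeasurable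
  · set t : ℝ := ‖x‖ with ht
    have ht0 : 0 ≤ t := norm_nonneg x
    have h1 : (0:ℝ) < 1 + t := by linarith
    have h2 : (1 + t) ^ (-((n:ℝ) + 1)) = ((1 + t) ^ (n + 1))⁻¹ := by
      rw [Real.rpow_neg h1.le]
      norm_cast
    rw [Real.norm_eq_abs, abs_of_pos (Real.exp_pos _), h2, ← div_eq_mul_inv,
      le_div_iff₀ (by positivity)]
    rw [le_div_iff₀ (by positivity)]
    have hkey : (b * (1 + t)) ^ (n + 1) / (Nat.factorial (n + 1) : ℝ) ≤ Real.exp (b * (1 + t)) :=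
      Real.pow_div_factorial_le_exp (x := b * (1 + t)) (by positivity) (n + 1)
    have hkey' : (b * (1 + t)) ^ (n + 1) ≤ ((Nat.factorial (n + 1) : ℝ)) * Real.exp (b * (1 + t)) := by
      rw [div_le_iff₀ (by positivity)] at hkey
      linarith [hkey]
    have hexp : Real.exp (-b * t) * Real.exp (b * (1 + t)) = Real.exp b := by
      rw [← Real.exp_add]; ring_nf
    have hpow : (b * (1 + t)) ^ (n + 1) = b ^ (n + 1) * (1 + t) ^ (n + 1) := mul_pow _ _ _
    have hEpos : (0:ℝ) < Real.exp (-b * t) := Real.exp_pos _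
    calc Real.exp (-b * t) * (1 + t) ^ (n + 1) * b ^ (n + 1)
        = Real.exp (-b * t) * (b * (1 + t)) ^ (n + 1) := by rw [hpow]; ring
      _ ≤ Real.exp (-b * t) * (((Nat.factorial (n + 1) : ℝ)) * Real.exp (b * (1 + t))) := by
          exact mul_le_mul_of_nonneg_left hkey' hEpos.le
      _ = ((Nat.factorial (n + 1) : ℝ)) * (Real.exp (-b * t) * Real.exp (b * (1 + t))) := by ring
      _ = Real.exp b * (Nat.factorial (n + 1) : ℝ) := by rw [hexp]; ring

theorem cgo_L2_decay_estimate {n : ℕ} (hn : 2 ≤ n)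
    (ξ η : Euc n) (hξ : ‖ξ‖ = 1) (hη : ‖η‖ = 1) (horth : (inner ℝ ξ η : ℝ) = 0)
    (ζ : Fin n → ℂ) (hζ : ∀ j, ζ j = (ξ j : ℂ) + Complex.I * (η j : ℂ))
    (ρ : ℝ) (hρ : ρ ∈ Set.Ioc (0:ℝ) 1) (h : ℝ) (hh : 0 < h)
    (C : Set (Euc n)) (hC : C = {x | ρ * ‖x‖ ≤ (inner ℝ ξ x : ℝ)}) :
    ∃ C₂ : ℝ, ∀ τ : ℝ, 1 ≤ τ →
      ∫ x in C ∩ Metric.ball 0 h,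
          ‖Complex.exp (-(τ : ℂ) * ∑ j, ζ j * (x j : ℂ))‖ ^ 2 ≤ C₂ / τ ^ n := by
  obtain ⟨hρ0, hρ1⟩ := hρ
  refine ⟨∫ x : Euc n, Real.exp (-(2 * ρ) * ‖x‖), fun τ hτ => ?_⟩
  have hτ0 : (0:ℝ) < τ := lt_of_lt_of_le one_pos hτ
  set f : Euc n → ℝ := fun x => ‖Complex.exp (-(τ : ℂ) * ∑ j, ζ j * (x j : ℂ))‖ ^ 2 with hf
  set g : Euc n → ℝ := fun x => Real.exp (-(2 * ρ * τ) * ‖x‖) with hg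
  have hgint : Integrable g := cgo_aux_integrable (by positivity)
  -- pointwise bound on C
  have hpt : ∀ x ∈ C ∩ Metric.ball (0 : Euc n) h, f x ≤ g x := by
    intro x hx
    have hxC : ρ * ‖x‖ ≤ (inner ℝ ξ x : ℝ) := by
      have := hx.1; rw [hC] at this; exact this
    have hinner : (inner ℝ ξ x : ℝ) = ∑ j, ξ j * x j := by
      rw [PiLp.inner_apply]; exact Finset.sum_congr rfl fun i _ => by simp [mul_comm]
    have hre : (-(τ : ℂ) * ∑ j, ζ j * (x j : ℂ)).re = -τ * ∑ j, ξ j * x j := by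
      simp only [hζ]
      rw [Complex.mul_re]
      simp [Complex.re_sum, Complex.im_sum, Complex.mul_re, Complex.mul_im, Finset.mul_sum]
    have hnorm : f x = Real.exp (2 * ((-(τ : ℂ) * ∑ j, ζ j * (x j : ℂ)).re)) := by
      rw [hf]
      simp only [Complex.norm_exp]
      rw [← Real.exp_nat_mul]
      norm_num
    rw [hnorm, hre, hg]
    apply Real.exp_le_exp.mpr
    have hS : ρ * ‖x‖ ≤ ∑ j, ξ j * x j := by rw [← hinner]; exact hxC
    nlinarith [norm_nonneg x, hτ0.le]
  have hCclosed : IsClosed C := by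
    rw [hC]
    exact isClosed_le (continuous_const.mul continuous_norm)
      (Continuous.inner continuous_const continuous_id)
  have hmeas : MeasurableSet (C ∩ Metric.ball (0 : Euc n) h) :=
    hCclosed.measurableSet.inter measurableSet_ball
  have hfmeas : AEStronglyMeasurable f volume := by
    apply Continuous.aestronglyMeasurable
    apply Continuous.pow
    apply Continuous.norm
    apply Complex.continuous_exp.comp
    apply Continuous.mul continuous_const
    exact continuous_finset_sum _ fun j _ => Continuous.mul continuous_const
      (Complex.continuous_ofReal.comp (PiLp.continuous_apply 2 _ j))
  have hfint : IntegrableOn f (C ∩ Metric.ball (0 : Euc n) h) := by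
    refine hgint.integrableOn.mono' hfmeas.restrict ?_
    rw [ae_restrict_iff' hmeas]
    exact Filter.Eventually.of_forall fun x hx => by
      rw [Real.norm_eq_abs, abs_of_nonneg (by positivity)]; exact hpt x hx
  have step1 : ∫ x in C ∩ Metric.ball (0 : Euc n) h, f x ≤
      ∫ x in C ∩ Metric.ball (0 : Euc n) h, g x :=
    setIntegral_mono_on hfint hgint.integrableOn hmeas hpt
  have step2 : ∫ x in C ∩ Metric.ball (0 : Euc n) h, g x ≤ ∫ x, g x :=
    setIntegral_le_integral hgint (Filter.Eventually.of_forall fun x => (Real.exp_pos _).le)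
  have step3 : ∫ x, g x = (∫ x : Euc n, Real.exp (-(2 * ρ) * ‖x‖)) / τ ^ n := by
    have := MeasureTheory.Measure.integral_comp_smul_of_nonneg (volume : Measure (Euc n))
      (fun y : Euc n => Real.exp (-(2 * ρ) * ‖y‖)) τ (hR := hτ0.le)
    rw [finrank_euclideanSpace_fin] at this
    have heq : ∀ x : Euc n, Real.exp (-(2 * ρ) * ‖τ • x‖) = g x := by
      intro x
      rw [norm_smul, Real.norm_eq_abs, abs_of_pos hτ0, hg]
      ring_nf
    rw [hg]
    calc ∫ x : Euc n, Real.exp (-(2 * ρ * τ) * ‖x‖)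
        = ∫ x : Euc n, Real.exp (-(2 * ρ) * ‖τ • x‖) := by
          congr 1; funext x; rw [heq x, hg]
      _ = (τ ^ n)⁻¹ • ∫ x : Euc n, Real.exp (-(2 * ρ) * ‖x‖) := this
      _ = (∫ x : Euc n, Real.exp (-(2 * ρ) * ‖x‖)) / τ ^ n := by
          rw [smul_eq_mul]; ring
  calc ∫ x in C ∩ Metric.ball (0 : Euc n) h, f x ≤ ∫ x, g x := le_trans step1 step2
    _ = _ := step3
end
end
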